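/- arXiv:2512.00222 — 3 statements merged into one kernel-verified Lean document; each statement's English description precedes it below -/
import Mathlib

section
/- Let Λ ∈ ℝ^{d×d} be symmetric positive definite, θ̂ ∈ ℝ^d with ‖θ̂‖₂ = 1, and β > 0. Let w⋆ be any maximizer of w ↦ ‖θ̂ + β Λ^{−1/2} w‖₂ over the unit sphere {w : ‖w‖₂ = 1} (a maximizer exists by compactness, and θ̂ + β Λ^{−1/2} w⋆ ≠ 0). Then a⋆ = (θ̂ + β Λ^{−1/2} w⋆)/‖θ̂ + β Λ^{−1/2} w⋆‖₂ is a maximizer of a ↦ ⟨a, θ̂⟩ + β √(aᵀ Λ^{−1} a) over the unit ball {a : ‖a‖₂ ≤ 1}, and the maximum value of this map over the unit ball equals ‖θ̂ + β Λ^{−1/2} w⋆‖₂. -/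
open Matrix

noncomputable section

/-- Euclidean norm of a vector in `ℝ^d`. -/
def vnorm {d : ℕ} (x : Fin d → ℝ) : ℝ := Real.sqrt (x ⬝ᵥ x)

/-- Projection onto the unit sphere, `x ↦ x / ‖x‖₂`. -/
def sphProj {d : ℕ} (x : Fin d → ℝ) : Fin d → ℝ := (vnorm x)⁻¹ • x

/-- `Λ^{-1/2}`: the inverse of the positive definite square root of `Λ`. -/
def posSemidefSqrt {d : ℕ} {M : Matrix (Fin d) (Fin d) ℝ} (hA : M.PosSemidef) :
    Matrix (Fin d) (Fin d) ℝ :=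
  hA.1.eigenvectorUnitary.1 * diagonal ((↑) ∘ (√·) ∘ hA.1.eigenvalues) *
    (star hA.1.eigenvectorUnitary : Matrix (Fin d) (Fin d) ℝ)

def invSqrt {d : ℕ} {M : Matrix (Fin d) (Fin d) ℝ} (hM : M.PosDef) :
    Matrix (Fin d) (Fin d) ℝ := (posSemidefSqrt hM.posSemidef)⁻¹

/-! Write `J(b) = ⟪b, θ⟫ + β ‖T b‖` with `T = Λ^{-1/2}` and `v = θ + β T w⋆`. For a unit `w`
along `T b`, symmetry of `T` gives `J(b) = ⟪b, θ + β T w⟫ ≤ ‖b‖ ‖θ + β T w‖ ≤ ‖b‖ ‖v‖`, so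
`J ≤ ‖v‖` on the unit ball. Conversely `J(v) ≥ ⟪v, θ + β T w⋆⟫ = ‖v‖²`, and `J` is positively
homogeneous, so `J(v / ‖v‖) = ‖v‖`. Testing the bound at `b = θ` gives `‖v‖ ≥ 1`, hence `v ≠ 0`. -/

open RealInnerProductSpace WithLp

section UcbIndex

variable {E : Type*} [NormedAddCommGroup E] [InnerProductSpace ℝ E]

-- With `T = Λ^{-1/2}` one has `‖T b‖ = √(bᵀ Λ⁻¹ b)`: this is the LinUCB objective.
def ucbIndex (θ : E) (β : ℝ) (T : E →ₗ[ℝ] E) (b : E) : ℝ := ⟪b, θ⟫ + β * ‖T b‖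

theorem exists_norm_eq_one_inner_eq_norm {u : E} (hu : ‖u‖ = 1) (x : E) :
    ∃ w : E, ‖w‖ = 1 ∧ ⟪x, w⟫ = ‖x‖ := by
  rcases eq_or_ne x 0 with rfl | hx
  · exact ⟨u, hu, by simp⟩
  · refine ⟨‖x‖⁻¹ • x, by simp [norm_smul, hx], ?_⟩
    rw [inner_smul_right, real_inner_self_eq_norm_sq]
    field_simp

variable {T : E →ₗ[ℝ] E} {θ wₒ : E} {β : ℝ}

theorem ucbIndex_smul {c : ℝ} (hc : 0 ≤ c) (b : E) :
    ucbIndex θ β T (c • b) = c * ucbIndex θ β T b := by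
  rw [ucbIndex, ucbIndex, real_inner_smul_left, map_smul, norm_smul, Real.norm_of_nonneg hc]
  ring

theorem ucbIndex_le_mul_norm (hT : T.IsSymmetric) (hwₒ : ‖wₒ‖ = 1)
    (hmax : ∀ w : E, ‖w‖ = 1 → ‖θ + β • T w‖ ≤ ‖θ + β • T wₒ‖) (b : E) :
    ucbIndex θ β T b ≤ ‖b‖ * ‖θ + β • T wₒ‖ := by
  obtain ⟨w, hw, hTbw⟩ := exists_norm_eq_one_inner_eq_norm hwₒ (T b)
  calc ucbIndex θ β T b = ⟪b, θ + β • T w⟫ := by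
        rw [ucbIndex, inner_add_right, real_inner_smul_right, ← hT, hTbw]
    _ ≤ ‖b‖ * ‖θ + β • T w‖ := real_inner_le_norm _ _
    _ ≤ ‖b‖ * ‖θ + β • T wₒ‖ := by gcongr; exact hmax w hw

theorem norm_sq_le_ucbIndex (hT : T.IsSymmetric) (hβ : 0 ≤ β) (hwₒ : ‖wₒ‖ ≤ 1) :
    ‖θ + β • T wₒ‖ ^ 2 ≤ ucbIndex θ β T (θ + β • T wₒ) := by
  set v := θ + β • T wₒ with hv
  calc ‖v‖ ^ 2 = ⟪v, θ⟫ + β * ⟪T v, wₒ⟫ := by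
        rw [← real_inner_self_eq_norm_sq]
        nth_rw 2 [hv]
        rw [inner_add_right, real_inner_smul_right, hT]
    _ ≤ ⟪v, θ⟫ + β * ‖T v‖ := by
        gcongr
        calc ⟪T v, wₒ⟫ ≤ ‖T v‖ * ‖wₒ‖ := real_inner_le_norm _ _
          _ ≤ ‖T v‖ := mul_le_of_le_one_right (norm_nonneg _) hwₒ

theorem one_le_norm_add_smul (hT : T.IsSymmetric) (hβ : 0 ≤ β) (hθ : ‖θ‖ = 1)
    (hwₒ : ‖wₒ‖ = 1) (hmax : ∀ w : E, ‖w‖ = 1 → ‖θ + β • T w‖ ≤ ‖θ + β • T wₒ‖) :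
    1 ≤ ‖θ + β • T wₒ‖ := by
  have h := ucbIndex_le_mul_norm hT hwₒ hmax θ
  rw [ucbIndex, real_inner_self_eq_norm_sq, hθ, one_mul] at h
  nlinarith [norm_nonneg (T θ)]

theorem ucbIndex_normalize_eq_norm (hT : T.IsSymmetric) (hβ : 0 ≤ β) (hθ : ‖θ‖ = 1)
    (hwₒ : ‖wₒ‖ = 1) (hmax : ∀ w : E, ‖w‖ = 1 → ‖θ + β • T w‖ ≤ ‖θ + β • T wₒ‖) :
    ucbIndex θ β T (‖θ + β • T wₒ‖⁻¹ • (θ + β • T wₒ)) = ‖θ + β • T wₒ‖ := by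
  have hv : 0 < ‖θ + β • T wₒ‖ := one_pos.trans_le (one_le_norm_add_smul hT hβ hθ hwₒ hmax)
  have hupper := ucbIndex_le_mul_norm hT hwₒ hmax (θ + β • T wₒ)
  have hlower := norm_sq_le_ucbIndex (θ := θ) hT hβ hwₒ.le
  rw [ucbIndex_smul (inv_nonneg.2 hv.le)]
  field_simp
  linarith

end UcbIndex

section MatrixBridge

open scoped MatrixOrder

variable {d : ℕ}

theorem posSemidefSqrt_eq_sqrt {M : Matrix (Fin d) (Fin d) ℝ} (hM : M.PosSemidef) :
    posSemidefSqrt hM = CFC.sqrt M := by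
  rw [CFC.sqrt_eq_real_sqrt M hM.nonneg, cfcₙ_eq_cfc, hM.1.cfc_eq]
  rfl

theorem invSqrt_isHermitian {M : Matrix (Fin d) (Fin d) ℝ} (hM : M.PosDef) :
    (invSqrt hM).IsHermitian := by
  rw [invSqrt, posSemidefSqrt_eq_sqrt]
  exact (Matrix.nonneg_iff_posSemidef.1 (CFC.sqrt_nonneg M)).isHermitian.inv

theorem invSqrt_mul_self {M : Matrix (Fin d) (Fin d) ℝ} (hM : M.PosDef) :
    invSqrt hM * invSqrt hM = M⁻¹ := by
  rw [invSqrt, ← Matrix.mul_inv_rev, posSemidefSqrt_eq_sqrt,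
    CFC.sqrt_mul_sqrt_self M hM.posSemidef.nonneg]

theorem dotProduct_eq_inner_toLp {n : Type*} [Fintype n] (x y : n → ℝ) :
    x ⬝ᵥ y = ⟪toLp 2 x, toLp 2 y⟫ := by
  rw [EuclideanSpace.inner_toLp_toLp, star_trivial, dotProduct_comm]

theorem vnorm_eq_norm_toLp (x : Fin d → ℝ) : vnorm x = ‖toLp 2 x‖ := by
  rw [vnorm, dotProduct_eq_inner_toLp, real_inner_self_eq_norm_sq, Real.sqrt_sq (norm_nonneg _)]

theorem toLp_sphProj (x : Fin d → ℝ) : toLp 2 (sphProj x) = ‖toLp 2 x‖⁻¹ • toLp 2 x := by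
  rw [sphProj, vnorm_eq_norm_toLp, toLp_smul]

theorem sqrt_dotProduct_mul_self_mulVec {S : Matrix (Fin d) (Fin d) ℝ}
    (hS : S.IsHermitian) (b : Fin d → ℝ) : √(b ⬝ᵥ (S * S) *ᵥ b) = vnorm (S *ᵥ b) := by
  rw [vnorm, ← mulVec_mulVec, dotProduct_mulVec, ← mulVec_transpose,
    ← conjTranspose_eq_transpose_of_trivial, hS.eq]

theorem ucbIndex_toLp {S : Matrix (Fin d) (Fin d) ℝ} (hS : S.IsHermitian)
    (θ : Fin d → ℝ) (β : ℝ) (b : Fin d → ℝ) :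
    ucbIndex (toLp 2 θ) β S.toEuclideanLin (toLp 2 b) = b ⬝ᵥ θ + β * √(b ⬝ᵥ (S * S) *ᵥ b) := by
  rw [sqrt_dotProduct_mul_self_mulVec hS, vnorm_eq_norm_toLp, dotProduct_eq_inner_toLp]
  rfl

end MatrixBridge

theorem ucb_action_representation_general
    (d : ℕ)
    (Lmat : Matrix (Fin d) (Fin d) ℝ) (hL : Lmat.PosDef)
    (θhat : Fin d → ℝ) (hθ : vnorm θhat = 1) (β : ℝ) (hβ : 0 < β)
    (wstar : Fin d → ℝ) (hw : vnorm wstar = 1)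
    (hmax : ∀ w : Fin d → ℝ, vnorm w = 1 →
      vnorm (θhat + β • (invSqrt hL).mulVec w) ≤
        vnorm (θhat + β • (invSqrt hL).mulVec wstar)) :
    (θhat + β • (invSqrt hL).mulVec wstar ≠ 0) ∧
    vnorm (sphProj (θhat + β • (invSqrt hL).mulVec wstar)) ≤ 1 ∧
    (∀ b : Fin d → ℝ, vnorm b ≤ 1 →
      b ⬝ᵥ θhat + β * Real.sqrt (b ⬝ᵥ (Lmat⁻¹).mulVec b) ≤
        sphProj (θhat + β • (invSqrt hL).mulVec wstar) ⬝ᵥ θhat +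
          β * Real.sqrt (sphProj (θhat + β • (invSqrt hL).mulVec wstar) ⬝ᵥ
            (Lmat⁻¹).mulVec (sphProj (θhat + β • (invSqrt hL).mulVec wstar)))) ∧
    (sphProj (θhat + β • (invSqrt hL).mulVec wstar) ⬝ᵥ θhat +
        β * Real.sqrt (sphProj (θhat + β • (invSqrt hL).mulVec wstar) ⬝ᵥ
          (Lmat⁻¹).mulVec (sphProj (θhat + β • (invSqrt hL).mulVec wstar))) =
      vnorm (θhat + β • (invSqrt hL).mulVec wstar)) := by
  have hS := invSqrt_isHermitian hL
  have hT := isSymmetric_toEuclideanLin_iff.2 hS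
  set T := (invSqrt hL).toEuclideanLin
  have htoLp (w : Fin d → ℝ) :
      toLp 2 (θhat + β • (invSqrt hL) *ᵥ w) = toLp 2 θhat + β • T (toLp 2 w) := rfl
  rw [vnorm_eq_norm_toLp] at hθ hw
  replace hmax (w : EuclideanSpace ℝ (Fin d)) (hw : ‖w‖ = 1) := by
    simpa only [vnorm_eq_norm_toLp, htoLp, toLp_ofLp] using
      hmax (ofLp w) (by rwa [vnorm_eq_norm_toLp])
  simp only [← invSqrt_mul_self hL, ← ucbIndex_toLp hS, vnorm_eq_norm_toLp, toLp_sphProj, htoLp]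
  have hpos := one_pos.trans_le (one_le_norm_add_smul hT hβ.le hθ hw hmax)
  have hval := ucbIndex_normalize_eq_norm hT hβ.le hθ hw hmax
  have hv := norm_pos_iff.1 hpos
  refine ⟨fun h => hv ?_, (norm_smul_inv_norm hv).le, fun b hb => ?_, hval⟩
  · rw [← htoLp, h, toLp_zero]
  · rw [hval]
    exact (ucbIndex_le_mul_norm hT hw hmax _).trans (mul_le_of_le_one_left hpos.le hb)

/-- **Lemma (an equivalent representation of the LinUCB action).**
If `w⋆` maximizes `w ↦ ‖θ̂ + β Λ^{-1/2} w‖₂` over the unit sphere, then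
`θ̂ + β Λ^{-1/2} w⋆ ≠ 0`, and its projection `a⋆` onto the unit sphere maximizes
`a ↦ ⟨a, θ̂⟩ + β √(aᵀ Λ⁻¹ a)` over the unit ball; the maximum value equals
`‖θ̂ + β Λ^{-1/2} w⋆‖₂`. -/
theorem ucb_action_representation
    (d : ℕ) (hd : 1 ≤ d)
    (Lmat : Matrix (Fin d) (Fin d) ℝ) (hL : Lmat.PosDef)
    (θhat : Fin d → ℝ) (hθ : vnorm θhat = 1) (β : ℝ) (hβ : 0 < β)
    (wstar : Fin d → ℝ) (hw : vnorm wstar = 1)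
    (hmax : ∀ w : Fin d → ℝ, vnorm w = 1 →
      vnorm (θhat + β • (invSqrt hL).mulVec w) ≤
        vnorm (θhat + β • (invSqrt hL).mulVec wstar)) :
    (θhat + β • (invSqrt hL).mulVec wstar ≠ 0) ∧
    vnorm (sphProj (θhat + β • (invSqrt hL).mulVec wstar)) ≤ 1 ∧
    (∀ b : Fin d → ℝ, vnorm b ≤ 1 →
      b ⬝ᵥ θhat + β * Real.sqrt (b ⬝ᵥ (Lmat⁻¹).mulVec b) ≤
        sphProj (θhat + β • (invSqrt hL).mulVec wstar) ⬝ᵥ θhat +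
          β * Real.sqrt (sphProj (θhat + β • (invSqrt hL).mulVec wstar) ⬝ᵥ
            (Lmat⁻¹).mulVec (sphProj (θhat + β • (invSqrt hL).mulVec wstar)))) ∧
    (sphProj (θhat + β • (invSqrt hL).mulVec wstar) ⬝ᵥ θhat +
        β * Real.sqrt (sphProj (θhat + β • (invSqrt hL).mulVec wstar) ⬝ᵥ
          (Lmat⁻¹).mulVec (sphProj (θhat + β • (invSqrt hL).mulVec wstar))) =
      vnorm (θhat + β • (invSqrt hL).mulVec wstar)) :=
  ucb_action_representation_general d Lmat hL θhat hθ β hβ wstar hw hmax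

end
end

section
/- Fix d ≥ 1, β > 0, c₀ > 0, positive reals λ₁, …, λ_d and ν ∈ ℝ^d. Define g(w) = Σ_{i=1}^d (ν_i + β w_i/√λ_i)², let w⋆ be any maximizer of g over the sphere {w : ‖w‖₂ = c₀}, and set κ_i⋆ = (ν_i + β w_i⋆/√λ_i)/√(g(w⋆)). Suppose max_{1 ≤ i ≤ d} β²/λ_i ≥ (c/c₀) ‖ν‖₂² for some c ∈ (0,1]. Then there exist constants c₁ > 1 and C > 0, depending only on c and c₀, such that with L = {i : λ_i ≤ c₁ · min_{1 ≤ j ≤ d} λ_j}, one has Σ_{i∈L} (κ_i⋆)² ≥ C c₀². -/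
open Matrix Finset

open scoped Classical

noncomputable section

/-- The objective `g(w) = Σ_i (ν_i + β w_i/√λ_i)²`. -/
def gObj {d : ℕ} (β : ℝ) (ν lam : Fin d → ℝ) (w : Fin d → ℝ) : ℝ :=
  ∑ i, (ν i + β * w i / Real.sqrt (lam i))^2

/-! Let `λ_{i₀} = min_j λ_j` and `A = β² c₀² / λ_{i₀}`. Testing the maximizer against `±c₀ e_{i₀}`
(their average) gives `g(w⋆) ≥ ‖ν‖² + A`, while the hypothesis says `‖ν‖² ≤ K A` with
`K = 1/(c c₀)`. Off `L` every weight satisfies `β²/λ_i < A / (c₁ c₀²)`, so by the weighted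
inequality `(x + y)² ≤ (1 + t) x² + (1 + 1/t) y²` the part of `g(w⋆)` outside `L` is at most
`(1 + t) ‖ν‖² + (1 + 1/t) A / c₁ ≤ ‖ν‖² + A/2` for `t = 1/(4K)` and `c₁ = 4(1 + 4K)`.
Hence a fraction `1/(2(K + 1))` of `g(w⋆)` lies on `L`. -/

lemma add_sq_le_mul_add_mul (x y : ℝ) {t : ℝ} (ht : 0 < t) :
    (x + y) ^ 2 ≤ (1 + t) * x ^ 2 + (1 + t⁻¹) * y ^ 2 := by
  have key : 0 ≤ (t * x - y) ^ 2 / t := by positivity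
  have expand : (1 + t) * x ^ 2 + (1 + t⁻¹) * y ^ 2 - (x + y) ^ 2 = (t * x - y) ^ 2 / t := by
    field_simp
    ring
  linarith

lemma Finset.sum_add_sq_le {ι : Type*} (s : Finset ι) (x y : ι → ℝ) {t : ℝ} (ht : 0 < t) :
    ∑ i ∈ s, (x i + y i) ^ 2 ≤ (1 + t) * ∑ i ∈ s, x i ^ 2 + (1 + t⁻¹) * ∑ i ∈ s, y i ^ 2 := by
  rw [Finset.mul_sum, Finset.mul_sum, ← Finset.sum_add_distrib]
  exact Finset.sum_le_sum fun i _ => add_sq_le_mul_add_mul (x i) (y i) ht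

lemma div_le_sub_of_le_young {K N A G S : ℝ} (hK : 0 < K) (hNA : N ≤ K * A) (hG : N + A ≤ G)
    (hS : S ≤ (1 + (4 * K)⁻¹) * N + (1 + 4 * K) * (A / (4 * (1 + 4 * K)))) :
    G / (2 * (K + 1)) ≤ G - S := by
  have hN : (4 * K)⁻¹ * N ≤ A / 4 := by
    rw [inv_mul_le_iff₀ (by positivity)]
    linarith
  have hA : (1 + 4 * K) * (A / (4 * (1 + 4 * K))) = A / 4 := by
    field_simp
  rw [div_le_iff₀ (by positivity)]
  nlinarith [mul_le_mul_of_nonneg_left hG (by positivity : (0:ℝ) ≤ 2 * K + 1)]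

lemma dotProduct_self_eq_sum_sq {ι : Type*} [Fintype ι] (x : ι → ℝ) :
    x ⬝ᵥ x = ∑ i, x i ^ 2 := by
  simp only [dotProduct, sq]

section

variable {d : ℕ}

lemma sum_sq_eq_of_vnorm_eq {w : Fin d → ℝ} {r : ℝ} (hw : vnorm w = r) :
    ∑ i, w i ^ 2 = r ^ 2 := by
  rw [← dotProduct_self_eq_sum_sq, ← hw, vnorm,
    Real.sq_sqrt (by rw [dotProduct_self_eq_sum_sq]; positivity)]

lemma vnorm_neg (w : Fin d → ℝ) : vnorm (-w) = vnorm w := by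
  simp only [vnorm, neg_dotProduct, dotProduct_neg, neg_neg]

lemma vnorm_single {r : ℝ} (hr : 0 ≤ r) (i : Fin d) : vnorm (Pi.single i r) = r := by
  rw [vnorm, dotProduct_single, Pi.single_eq_same, Real.sqrt_mul_self hr]

lemma div_sqrt_mul_sq {l : ℝ} (hl : 0 ≤ l) (β x : ℝ) :
    (β * x / Real.sqrt l) ^ 2 = β ^ 2 / l * x ^ 2 := by
  rw [div_pow, Real.sq_sqrt hl]
  ring

lemma gObj_add_gObj_neg (β : ℝ) (ν lam w : Fin d → ℝ) :
    gObj β ν lam w + gObj β ν lam (-w)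
      = 2 * (ν ⬝ᵥ ν) + 2 * ∑ i, (β * w i / Real.sqrt (lam i)) ^ 2 := by
  simp only [gObj, dotProduct_self_eq_sum_sq, Finset.mul_sum, ← Finset.sum_add_distrib,
    Pi.neg_apply]
  exact Finset.sum_congr rfl fun i _ => by ring

lemma gObj_single_add_gObj_neg_single (β : ℝ) (ν : Fin d → ℝ) {lam : Fin d → ℝ}
    (hlam : ∀ i, 0 ≤ lam i) (i : Fin d) (r : ℝ) :
    gObj β ν lam (Pi.single i r) + gObj β ν lam (-Pi.single i r)
      = 2 * (ν ⬝ᵥ ν) + 2 * (β ^ 2 / lam i * r ^ 2) := by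
  rw [gObj_add_gObj_neg, Fintype.sum_eq_single i, Pi.single_eq_same, div_sqrt_mul_sq (hlam i)]
  intro j hj
  rw [Pi.single_eq_of_ne hj, mul_zero, zero_div, sq, zero_mul]

lemma dotProduct_self_add_le_gObj_of_isMax (β : ℝ) (ν : Fin d → ℝ) {lam : Fin d → ℝ}
    (hlam : ∀ i, 0 ≤ lam i) {r : ℝ} (hr : 0 ≤ r) {wstar : Fin d → ℝ}
    (hmax : ∀ w : Fin d → ℝ, vnorm w = r → gObj β ν lam w ≤ gObj β ν lam wstar) (i : Fin d) :
    ν ⬝ᵥ ν + β ^ 2 / lam i * r ^ 2 ≤ gObj β ν lam wstar := by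
  have hplus := hmax _ (vnorm_single hr i)
  have hminus := hmax _ ((vnorm_neg _).trans (vnorm_single hr i))
  linarith [gObj_single_add_gObj_neg_single β ν hlam i r]

lemma dotProduct_self_le_of_exists_le {lam : Fin d → ℝ} (hlam : ∀ i, 0 < lam i) {i₀ : Fin d}
    (hi₀ : ∀ j, lam i₀ ≤ lam j) {c c₀ β : ℝ} (hc : 0 < c) (hc₀ : 0 < c₀) {ν : Fin d → ℝ}
    (hν : ∃ i, (c / c₀) * (ν ⬝ᵥ ν) ≤ β ^ 2 / lam i) :
    ν ⬝ᵥ ν ≤ 1 / (c * c₀) * (β ^ 2 / lam i₀ * c₀ ^ 2) := by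
  obtain ⟨i, hi⟩ := hν
  have hrw : 1 / (c * c₀) * (β ^ 2 / lam i₀ * c₀ ^ 2) = β ^ 2 / lam i₀ / (c / c₀) := by
    field_simp
  rw [hrw, le_div_iff₀' (by positivity)]
  exact hi.trans (div_le_div_of_nonneg_left (sq_nonneg β) (hlam i₀) (hi₀ i))

lemma sum_sq_div_sqrt_le {lam : Fin d → ℝ} (hlam : ∀ i, 0 ≤ lam i) (s : Finset (Fin d))
    {β m : ℝ} (hm : 0 ≤ m) (hs : ∀ i ∈ s, β ^ 2 / lam i ≤ m) (w : Fin d → ℝ) :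
    ∑ i ∈ s, (β * w i / Real.sqrt (lam i)) ^ 2 ≤ m * ∑ i, w i ^ 2 :=
  calc ∑ i ∈ s, (β * w i / Real.sqrt (lam i)) ^ 2
      ≤ ∑ i ∈ s, m * w i ^ 2 := Finset.sum_le_sum fun i hi => by
        rw [div_sqrt_mul_sq (hlam i)]
        exact mul_le_mul_of_nonneg_right (hs i hi) (sq_nonneg _)
    _ ≤ ∑ i, m * w i ^ 2 :=
        Finset.sum_le_sum_of_subset_of_nonneg (Finset.subset_univ s) fun i _ _ => by positivity
    _ = m * ∑ i, w i ^ 2 := (Finset.mul_sum _ _ _).symm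

lemma sq_div_le_of_not_forall_le_mul {lam : Fin d → ℝ} (hlam : ∀ i, 0 < lam i) {i₀ : Fin d}
    (hi₀ : ∀ j, lam i₀ ≤ lam j) {c₁ : ℝ} (hc₁ : 0 < c₁) (β : ℝ) {i : Fin d}
    (hi : ¬ ∀ j, lam i ≤ c₁ * lam j) : β ^ 2 / lam i ≤ β ^ 2 / lam i₀ / c₁ := by
  obtain ⟨j, hj⟩ := not_forall.1 hi
  rw [not_le] at hj
  rw [div_div, mul_comm]
  exact div_le_div_of_nonneg_left (sq_nonneg β) (mul_pos hc₁ (hlam i₀))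
    ((mul_le_mul_of_nonneg_left (hi₀ j) hc₁.le).trans hj.le)

lemma sum_filter_not_le_mul_sq_le {lam : Fin d → ℝ} (hlam : ∀ i, 0 < lam i) {i₀ : Fin d}
    (hi₀ : ∀ j, lam i₀ ≤ lam j) {c₁ : ℝ} (hc₁ : 0 < c₁) (β : ℝ) (ν w : Fin d → ℝ) {t : ℝ}
    (ht : 0 < t) :
    ∑ i ∈ univ.filter (fun i => ¬ ∀ j, lam i ≤ c₁ * lam j),
        (ν i + β * w i / Real.sqrt (lam i)) ^ 2
      ≤ (1 + t) * (ν ⬝ᵥ ν) + (1 + t⁻¹) * (β ^ 2 / lam i₀ * (∑ i, w i ^ 2) / c₁) := by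
  refine (Finset.sum_add_sq_le _ _ _ ht).trans (add_le_add ?_ ?_)
  · refine mul_le_mul_of_nonneg_left ?_ (by positivity)
    rw [dotProduct_self_eq_sum_sq]
    exact Finset.sum_le_sum_of_subset_of_nonneg (Finset.subset_univ _)
      fun i _ _ => sq_nonneg _
  · refine mul_le_mul_of_nonneg_left ?_ (by positivity)
    have hm : 0 ≤ β ^ 2 / lam i₀ / c₁ := by have := hlam i₀; positivity
    rw [← div_mul_eq_mul_div]
    refine sum_sq_div_sqrt_le (fun i => (hlam i).le) _ hm (fun i hi => ?_) w
    exact sq_div_le_of_not_forall_le_mul hlam hi₀ hc₁ β (Finset.mem_filter.1 hi).2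

end

/-- **Lemma (spectral concentration of the constrained maximizer).**
If `max_i β²/λ_i ≥ (c/c₀)‖ν‖₂²`, then any maximizer `w⋆` of `g` over the sphere of
radius `c₀` puts mass at least `C c₀²` (in the normalized coordinates `κ⋆`) on the
index set `L = {i : λ_i ≤ c₁ min_j λ_j}`, for constants `c₁ > 1` and `C > 0`
depending only on `c` and `c₀`. -/
theorem maximizer_mass_on_small_eigenvalues
    (c c₀ : ℝ) (hc : c ∈ Set.Ioc (0:ℝ) 1) (hc₀ : 0 < c₀) :
    ∃ c₁ C : ℝ, 1 < c₁ ∧ 0 < C ∧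
      ∀ (d : ℕ), 1 ≤ d →
      ∀ (β : ℝ), 0 < β →
      ∀ (lam : Fin d → ℝ), (∀ i, 0 < lam i) →
      ∀ (ν : Fin d → ℝ),
        (∃ i, (c / c₀) * (ν ⬝ᵥ ν) ≤ β^2 / lam i) →
      ∀ (wstar : Fin d → ℝ), vnorm wstar = c₀ →
        (∀ w : Fin d → ℝ, vnorm w = c₀ → gObj β ν lam w ≤ gObj β ν lam wstar) →
        C * c₀^2 ≤
          ∑ i ∈ Finset.univ.filter (fun i => ∀ j, lam i ≤ c₁ * lam j),
            ((ν i + β * wstar i / Real.sqrt (lam i)) / Real.sqrt (gObj β ν lam wstar))^2 := by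
  obtain ⟨hc_pos, -⟩ := hc
  set K := 1 / (c * c₀)
  have hK : 0 < K := by positivity
  refine ⟨4 * (1 + 4 * K), 1 / (2 * (K + 1) * c₀ ^ 2), by linarith, by positivity, ?_⟩
  intro d hd β hβ lam hlam ν hν wstar hwstar hmax
  have : Nonempty (Fin d) := ⟨⟨0, hd⟩⟩
  obtain ⟨i₀, hi₀⟩ := Finite.exists_min lam
  set A := β ^ 2 / lam i₀ * c₀ ^ 2
  set G := gObj β ν lam wstar
  have hνA : ν ⬝ᵥ ν ≤ K * A := dotProduct_self_le_of_exists_le hlam hi₀ hc_pos hc₀ hν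
  have hG : ν ⬝ᵥ ν + A ≤ G :=
    dotProduct_self_add_le_gObj_of_isMax β ν (fun i => (hlam i).le) hc₀.le hmax i₀
  have hGpos : 0 < G := by
    have := hlam i₀
    exact (by rw [dotProduct_self_eq_sum_sq]; positivity : 0 < ν ⬝ᵥ ν + A).trans_le hG
  have hoff := sum_filter_not_le_mul_sq_le hlam hi₀ (by positivity : 0 < 4 * (1 + 4 * K)) β ν wstar
    (by positivity : 0 < (4 * K)⁻¹)
  rw [sum_sq_eq_of_vnorm_eq hwstar, inv_inv] at hoff
  have hsplit : _ + _ = G := Finset.sum_filter_add_sum_filter_not univ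
    (fun i => ∀ j, lam i ≤ 4 * (1 + 4 * K) * lam j)
    (fun i => (ν i + β * wstar i / Real.sqrt (lam i)) ^ 2)
  have hC : 1 / (2 * (K + 1) * c₀ ^ 2) * c₀ ^ 2 * G = G / (2 * (K + 1)) := by field_simp
  simp only [div_pow, Real.sq_sqrt hGpos.le, ← Finset.sum_div]
  rw [le_div_iff₀ hGpos, hC]
  linarith [div_le_sub_of_le_young hK hνA hG hoff]
end
end

section
/- Fix d ≥ 1, β > 0, c₀ > 0 and positive reals λ₁, …, λ_d with λ₁ ≥ λ_i for all i. Let ν ∈ ℝ^d with ‖ν‖₂ = c₀, let w⋆ be any maximizer of w ↦ Σ_{i=1}^d (ν_i + β w_i/√λ_i)² over the sphere {w : ‖w‖₂ = c₀}, and let w̃⋆ be any maximizer of w ↦ (c₀ + β w₁/√λ₁)² + Σ_{i=2}^d β² w_i²/λ_i over the same sphere (the canonical problem with signal c₀·e₁). Then the first coordinates satisfy |w⋆₁| ≤ |w̃⋆₁|. -/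
/-!
With `a i = β / √λᵢ` both objectives read `∑ i, (ν i + a i * w i) ^ 2`. Let `z` be the first
coordinate and `j` one where `a` is largest.

At a maximizer `w⋆`, if `(a_j² - a_z²) |w⋆ z| > a_z c₀`, shrink `|w⋆ z|` to
`t = a_z c₀ / (a_j² - a_z²)` and put the released mass into coordinate `j`, with the sign that
makes `a_j ν_j w_j` grow. This stays on the sphere and, since `|ν z| ≤ c₀`, gains at least
`(a_j² - a_z²)(|w⋆ z| - t)² > 0`.
So `(a_j² - a_z²) |w⋆ z| ≤ a_z c₀`.

For the signal `c₀ e_z` the objective at `w` is at most the profile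
`φ(w z) = (c₀ + a_z w_z)² + a_j² (c₀² - w_z²)`, with equality for vectors supported on `{z, j}`.
Such a vector with `z`-coordinate `m` shows `φ(m) ≤ φ(w̃⋆ z)`, and `φ` is strictly increasing
below `a_z c₀ / (a_j² - a_z²)`. Hence `m ≤ w̃⋆ z` for every `|m| ≤ c₀` obeying the bound above,
in particular for `m = |w⋆ z|`.
-/

open Matrix Finset

noncomputable section

def sqSphere (ι : Type*) [Fintype ι] (r : ℝ) : Set (ι → ℝ) := {v | ∑ i, v i ^ 2 = r}

theorem exists_sq_eq_and_abs_sub_eq {t w : ℝ} (htw : t ≤ |w|) :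
    ∃ x, x ^ 2 = t ^ 2 ∧ |x - w| = |w| - t := by
  rcases le_total 0 w with hw | hw
  · rw [abs_of_nonneg hw] at htw ⊢
    exact ⟨t, rfl, by rw [abs_sub_comm, abs_of_nonneg (by linarith)]⟩
  · rw [abs_of_nonpos hw] at htw ⊢
    exact ⟨-t, by ring, by rw [abs_of_nonneg (by linarith)]; ring⟩

theorem exists_sq_eq_and_mul_le_mul (k : ℝ) {s w : ℝ} (h : w ^ 2 ≤ s) :
    ∃ y, y ^ 2 = s ∧ k * w ≤ k * y := by
  have hs : |w| ≤ √s := Real.abs_le_sqrt h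
  have hsq : √s ^ 2 = s := Real.sq_sqrt ((sq_nonneg w).trans h)
  rcases le_total 0 k with hk | hk
  · exact ⟨√s, hsq, mul_le_mul_of_nonneg_left ((le_abs_self w).trans hs) hk⟩
  · exact ⟨-√s, by rw [neg_sq, hsq], mul_le_mul_of_nonpos_left (by linarith [neg_abs_le w]) hk⟩

theorem two_coordinate_gain_pos {a b ν₁ ν₂ w₁ w₂ x y c t : ℝ} (hνc : |ν₁| ≤ c)
    (hD : 0 < b ^ 2 - a ^ 2) (ht : (b ^ 2 - a ^ 2) * t = |a| * c) (htw : t < |w₁|)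
    (hx : x ^ 2 = t ^ 2) (hxw : |x - w₁| = |w₁| - t) (hy : y ^ 2 = w₂ ^ 2 + (w₁ ^ 2 - t ^ 2))
    (hνy : b * ν₂ * w₂ ≤ b * ν₂ * y) :
    0 < (ν₁ + a * x) ^ 2 - (ν₁ + a * w₁) ^ 2 + ((ν₂ + b * y) ^ 2 - (ν₂ + b * w₂) ^ 2) := by
  have hνx : -(|a| * c * (|w₁| - t)) ≤ a * ν₁ * (x - w₁) := by
    have : |a * ν₁ * (x - w₁)| ≤ |a| * c * (|w₁| - t) := by
      rw [abs_mul, abs_mul, hxw]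
      gcongr
    linarith [neg_abs_le (a * ν₁ * (x - w₁))]
  have hexpand : (ν₁ + a * x) ^ 2 - (ν₁ + a * w₁) ^ 2 + ((ν₂ + b * y) ^ 2 - (ν₂ + b * w₂) ^ 2)
      = (b ^ 2 - a ^ 2) * (w₁ ^ 2 - t ^ 2) + 2 * (a * ν₁ * (x - w₁))
        + 2 * (b * ν₂ * y - b * ν₂ * w₂) := by
    linear_combination a ^ 2 * hx + b ^ 2 * hy
  have hsquare : (b ^ 2 - a ^ 2) * (w₁ ^ 2 - t ^ 2) - 2 * (|a| * c * (|w₁| - t))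
      = (b ^ 2 - a ^ 2) * (|w₁| - t) ^ 2 := by
    rw [← ht, ← sq_abs w₁]; ring
  have hpos : 0 < (b ^ 2 - a ^ 2) * (|w₁| - t) ^ 2 := by have := sub_pos.2 htw; positivity
  linarith

theorem le_of_profile_le {a B c m t : ℝ} (hac : 0 < a * c) (hB : a ^ 2 ≤ B)
    (hm : (B - a ^ 2) * m ≤ a * c)
    (h : (c + a * m) ^ 2 + B * (c ^ 2 - m ^ 2) ≤ (c + a * t) ^ 2 + B * (c ^ 2 - t ^ 2)) :
    m ≤ t := by
  by_contra! htm
  have hdiff : (c + a * m) ^ 2 + B * (c ^ 2 - m ^ 2) - ((c + a * t) ^ 2 + B * (c ^ 2 - t ^ 2))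
      = 2 * (m - t) * (a * c - (B - a ^ 2) * m) + (B - a ^ 2) * (m - t) ^ 2 := by ring
  rcases (sub_nonneg.2 hB).lt_or_eq with hB' | hB'
  · nlinarith [mul_nonneg (sub_pos.2 htm).le (sub_nonneg.2 hm),
      mul_pos hB' (pow_pos (sub_pos.2 htm) 2)]
  · rw [← hB'] at hdiff
    nlinarith [mul_pos (sub_pos.2 htm) hac]

section

variable {ι : Type*} [Fintype ι]

theorem abs_le_of_mem_sqSphere {v : ι → ℝ} {c : ℝ} (hc : 0 ≤ c) (hv : v ∈ sqSphere ι (c ^ 2))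
    (k : ι) : |v k| ≤ c :=
  abs_le_of_sq_le_sq (hv ▸ single_le_sum (fun i _ => sq_nonneg (v i)) (mem_univ k)) hc

theorem single_mem_sqSphere [DecidableEq ι] (z : ι) (c : ℝ) :
    Pi.single z c ∈ sqSphere ι (c ^ 2) := by
  change ∑ i, (Pi.single z c : ι → ℝ) i ^ 2 = c ^ 2
  rw [Fintype.sum_eq_single z fun i hi => by simp [hi], Pi.single_eq_same]

theorem sum_sub_sum_of_eq_off_pair [DecidableEq ι] (F : ι → ℝ → ℝ) {v w : ι → ℝ} {z j : ι}
    (hzj : z ≠ j) (h : ∀ i, i ≠ z → i ≠ j → v i = w i) :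
    ∑ i, F i (v i) - ∑ i, F i (w i) = (F z (v z) - F z (w z)) + (F j (v j) - F j (w j)) := by
  rw [← sum_sub_distrib]
  exact Fintype.sum_eq_add z j hzj fun i hi => by rw [h i hi.1 hi.2, sub_self]

theorem sq_sub_sq_mul_abs_le_of_isMaxOn [DecidableEq ι] {ν a w : ι → ℝ} {r c : ℝ} {z j : ι}
    (hνz : |ν z| ≤ c) (hw : w ∈ sqSphere ι r)
    (hmax : IsMaxOn (fun v => ∑ i, (ν i + a i * v i) ^ 2) (sqSphere ι r) w) :
    (a j ^ 2 - a z ^ 2) * |w z| ≤ |a z| * c := by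
  have hac : 0 ≤ |a z| * c := mul_nonneg (abs_nonneg _) ((abs_nonneg _).trans hνz)
  by_contra! hgt
  have hD : 0 < a j ^ 2 - a z ^ 2 := pos_of_mul_pos_left (hac.trans_lt hgt) (abs_nonneg _)
  have hzj : z ≠ j := by rintro rfl; simp at hD
  set t := |a z| * c / (a j ^ 2 - a z ^ 2)
  have ht : 0 ≤ t := div_nonneg hac hD.le
  have htw : t < |w z| := by rwa [div_lt_iff₀' hD]
  obtain ⟨x, hx, hxw⟩ := exists_sq_eq_and_abs_sub_eq htw.le
  obtain ⟨y, hy, hνy⟩ := exists_sq_eq_and_mul_le_mul (a j * ν j)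
    (le_add_of_nonneg_right (sub_nonneg.2 (sq_abs (w z) ▸ pow_le_pow_left₀ ht htw.le 2)) :
      w j ^ 2 ≤ w j ^ 2 + (w z ^ 2 - t ^ 2))
  set v := Function.update (Function.update w z x) j y
  have hoff : ∀ i, i ≠ z → i ≠ j → v i = w i := fun i hiz hij => by
    simp [v, Function.update_of_ne hij, Function.update_of_ne hiz]
  have hvz : v z = x := by simp [v, Function.update_of_ne hzj]
  have hvj : v j = y := by simp [v]
  have hv : v ∈ sqSphere ι r := by
    have hsum := sum_sub_sum_of_eq_off_pair (fun _ s => s ^ 2) hzj hoff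
    have hw' : ∑ i, w i ^ 2 = r := hw
    rw [hvz, hvj] at hsum
    change ∑ i, v i ^ 2 = r
    linear_combination hw' + hsum + hx + hy
  have hgain : 0 < ∑ i, (ν i + a i * v i) ^ 2 - ∑ i, (ν i + a i * w i) ^ 2 := by
    rw [sum_sub_sum_of_eq_off_pair (fun i s => (ν i + a i * s) ^ 2) hzj hoff, hvz, hvj]
    exact two_coordinate_gain_pos hνz hD (mul_div_cancel₀ _ hD.ne') htw hx hxw hy hνy
  exact (sub_pos.1 hgain).not_ge (isMaxOn_iff.1 hmax v hv)

theorem sum_sq_single_add_mul_le [DecidableEq ι] {a w : ι → ℝ} {c : ℝ} {z j : ι}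
    (ha : ∀ i, a i ^ 2 ≤ a j ^ 2) :
    ∑ i, ((Pi.single z c : ι → ℝ) i + a i * w i) ^ 2
      ≤ (c + a z * w z) ^ 2 + a j ^ 2 * (∑ i, w i ^ 2 - w z ^ 2) := by
  have hrest : ∑ i ∈ univ.erase z, ((Pi.single z c : ι → ℝ) i + a i * w i) ^ 2
      ≤ a j ^ 2 * ∑ i ∈ univ.erase z, w i ^ 2 := by
    rw [mul_sum]
    refine sum_le_sum fun i hi => ?_
    rw [Pi.single_eq_of_ne (ne_of_mem_erase hi), zero_add, mul_pow]
    exact mul_le_mul_of_nonneg_right (ha i) (sq_nonneg _)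
  rw [← add_sum_erase _ _ (mem_univ z), ← add_sum_erase _ (fun i => w i ^ 2) (mem_univ z),
    Pi.single_eq_same]
  linarith

theorem le_apply_of_isMaxOn_single [DecidableEq ι] {a w : ι → ℝ} {c m : ℝ} {z j : ι}
    (hac : 0 < a z * c) (ha : ∀ i, a i ^ 2 ≤ a j ^ 2) (hm : |m| ≤ c)
    (hmD : (a j ^ 2 - a z ^ 2) * m ≤ a z * c) (hw : w ∈ sqSphere ι (c ^ 2))
    (hmax : IsMaxOn (fun v => ∑ i, ((Pi.single z c : ι → ℝ) i + a i * v i) ^ 2)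
      (sqSphere ι (c ^ 2)) w) :
    m ≤ w z := by
  have hup := sum_sq_single_add_mul_le (c := c) (z := z) (w := w) ha
  rw [show ∑ i, w i ^ 2 = c ^ 2 from hw] at hup
  have key : ∀ v ∈ sqSphere ι (c ^ 2), ∀ m', (a j ^ 2 - a z ^ 2) * m' ≤ a z * c →
      (c + a z * m') ^ 2 + a j ^ 2 * (c ^ 2 - m' ^ 2)
        ≤ ∑ i, ((Pi.single z c : ι → ℝ) i + a i * v i) ^ 2 → m' ≤ w z :=
    fun v hv m' hm' hle =>
      le_of_profile_le hac (ha z) hm' (hle.trans ((isMaxOn_iff.1 hmax v hv).trans hup))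
  rcases eq_or_ne z j with rfl | hzj
  · refine (le_abs_self m).trans (hm.trans
      (key _ (single_mem_sqSphere z c) c (by simpa using hac.le) ?_))
    rw [Fintype.sum_eq_single z fun i hi => by simp [hi]]
    simp
  · have hu : √(c ^ 2 - m ^ 2) ^ 2 = c ^ 2 - m ^ 2 :=
      Real.sq_sqrt (sub_nonneg.2 (sq_le_sq' (abs_le.1 hm).1 (abs_le.1 hm).2))
    set v : ι → ℝ := Pi.single z m + Pi.single j √(c ^ 2 - m ^ 2)
    have hv0 : ∀ i, i ≠ z ∧ i ≠ j → v i = 0 := fun i hi => by simp [v, hi.1, hi.2]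
    have hvz : v z = m := by simp [v, hzj]
    have hvj : v j = √(c ^ 2 - m ^ 2) := by simp [v, hzj.symm]
    refine key v ?_ m hmD (le_of_eq ?_)
    · change ∑ i, v i ^ 2 = c ^ 2
      rw [Fintype.sum_eq_add z j hzj fun i hi => by simp [hv0 i hi], hvz, hvj, hu]
      ring
    · rw [Fintype.sum_eq_add z j hzj fun i hi => by simp [hv0 i hi, hi.1], hvz, hvj,
        Pi.single_eq_same, Pi.single_eq_of_ne hzj.symm]
      linear_combination (-a j ^ 2) * hu

end

theorem vnorm_eq_iff_mem_sqSphere {d : ℕ} {x : Fin d → ℝ} {c : ℝ} (hc : 0 ≤ c) :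
    vnorm x = c ↔ x ∈ sqSphere (Fin d) (c ^ 2) := by
  rw [vnorm, dotProduct, Real.sqrt_eq_iff_eq_sq (sum_nonneg fun i _ => mul_self_nonneg (x i)) hc]
  simp only [sqSphere, Set.mem_ofPred_eq, sq]

theorem gObj_eq_sum {d : ℕ} (β : ℝ) (ν lam w : Fin d → ℝ) :
    gObj β ν lam w = ∑ i, (ν i + β / √(lam i) * w i) ^ 2 := by
  simp only [gObj, mul_div_right_comm]

/-- **Lemma (comparison with the canonical optimization problem).**
Let `w⋆` maximize `w ↦ Σ_i (ν_i + β w_i/√λ_i)²` over the sphere of radius `c₀`, and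
let `w̃⋆` maximize the canonical objective (with signal `c₀ e₁`) over the same sphere.
Then `|w⋆₁| ≤ |w̃⋆₁|`. -/
theorem first_coordinate_comparison
    (d : ℕ) (hd : 1 ≤ d) (β : ℝ) (hβ : 0 < β) (c₀ : ℝ) (hc₀ : 0 < c₀)
    (lam : Fin d → ℝ) (hlam : ∀ i, 0 < lam i)
    (ν : Fin d → ℝ) (hν : vnorm ν = c₀)
    (wstar : Fin d → ℝ) (hwstar : vnorm wstar = c₀)
    (hmax : ∀ w : Fin d → ℝ, vnorm w = c₀ → gObj β ν lam w ≤ gObj β ν lam wstar)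
    (wtil : Fin d → ℝ) (hwtil : vnorm wtil = c₀)
    (hmaxtil : ∀ w : Fin d → ℝ, vnorm w = c₀ →
      gObj β (fun i => if i = ⟨0, by omega⟩ then c₀ else 0) lam w ≤
        gObj β (fun i => if i = ⟨0, by omega⟩ then c₀ else 0) lam wtil) :
    |wstar ⟨0, by omega⟩| ≤ |wtil ⟨0, by omega⟩| := by
  set z : Fin d := ⟨0, by omega⟩
  set a : Fin d → ℝ := fun i => β / √(lam i)
  have ha : ∀ i, 0 < a i := fun i => div_pos hβ (Real.sqrt_pos.2 (hlam i))
  have hsphere {x : Fin d → ℝ} : vnorm x = c₀ ↔ x ∈ sqSphere (Fin d) (c₀ ^ 2) :=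
    vnorm_eq_iff_mem_sqSphere hc₀.le
  have : Nonempty (Fin d) := ⟨z⟩
  obtain ⟨j, hj⟩ := Finite.exists_max a
  have hmax' : IsMaxOn (fun v => ∑ i, (ν i + a i * v i) ^ 2) (sqSphere _ (c₀ ^ 2)) wstar :=
    isMaxOn_iff.2 fun v hv => by
      simpa only [gObj_eq_sum] using hmax v (hsphere.2 hv)
  have hmaxtil' : IsMaxOn (fun v => ∑ i, ((Pi.single z c₀ : Fin d → ℝ) i + a i * v i) ^ 2)
      (sqSphere _ (c₀ ^ 2)) wtil :=
    isMaxOn_iff.2 fun v hv => by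
      simpa only [gObj_eq_sum, Pi.single_apply] using hmaxtil v (hsphere.2 hv)
  have hub := sq_sub_sq_mul_abs_le_of_isMaxOn (j := j)
    (abs_le_of_mem_sqSphere hc₀.le (hsphere.1 hν) z) (hsphere.1 hwstar) hmax'
  rw [abs_of_pos (ha z)] at hub
  have hlow := le_apply_of_isMaxOn_single (mul_pos (ha z) hc₀)
    (fun i => pow_le_pow_left₀ (ha i).le (hj i) 2)
    ((abs_abs _).trans_le (abs_le_of_mem_sqSphere hc₀.le (hsphere.1 hwstar) z)) hub
    (hsphere.1 hwtil) hmaxtil'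
  exact hlow.trans (le_abs_self _)

end
end
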